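/- arXiv:1312.2552 — 2 statements merged into one kernel-verified Lean document; each statement's English description precedes it below -/
import Mathlib

section
/- If two infinite sequences of constraints s and w are x⃗-variants (i.e., ∃x⃗(s) ≡ ∃x⃗(w) pointwise), both satisfy d_{x⃗t⃗}^ω ≤ s and d_{x⃗t⃗}^ω ≤ w for an admissible substitution [t⃗/x⃗], then s ≡ w (pointwise equivalence). -/
/-- Observation (Equality and x⃗-variants), part (1): if two infinite sequences
of constraints `s` and `w` are `x⃗`-variants (i.e. `∃x⃗(s) ≡ ∃x⃗(w)` pointwise),
and both lie above the constant sequence `d_{x⃗t⃗}^ω` for an admissible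
substitution `[t⃗/x⃗]`, then `s ≡ w` pointwise. Here `E` denotes the
cylindrification operator `∃x⃗` (satisfying the cylindric axioms) and `dxt`
the diagonal element `d_{x⃗t⃗}`, whose admissibility is expressed by the
generalized axiom (3) of diagonal elements. -/
theorem xvariants_above_diag_eq {C : Type*} [Lattice C]
    (E : C → C) (dxt : C)
    (hE_le : ∀ c : C, E c ≤ c)
    (hE_mono : ∀ ⦃c d : C⦄, c ≤ d → E c ≤ E d)
    (hE_sup : ∀ c d : C, E (c ⊔ E d) = E c ⊔ E d)
    (hadm : ∀ c : C, c ≤ dxt ⊔ E (c ⊔ dxt))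
    (s w : ℕ → C)
    (hvar : ∀ i, E (s i) = E (w i))
    (hs : ∀ i, dxt ≤ s i) (hw : ∀ i, dxt ≤ w i) :
    s = w := by
  have key : ∀ (a b : C), dxt ≤ a → dxt ≤ b → E a = E b → a ≤ b := by
    intro a b ha hb hE
    calc a ≤ dxt ⊔ E (a ⊔ dxt) := hadm a
    _ = dxt ⊔ E a := by rw [sup_of_le_left ha]
    _ = dxt ⊔ E b := by rw [hE]
    _ ≤ b := sup_le hb (hE_le b)
  funext i
  exact le_antisymm (key _ _ (hs i) (hw i) (hvar i))
    (key _ _ (hw i) (hs i) (hvar i).symm)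
end

section
/- The operator ∀⃗x on sets of infinite constraint sequences is idempotent: ∀⃗x(∀⃗x(S)) = ∀⃗x(S) for every set S of sequences. -/
/-- Cylindrification over a list of variables `y⃗`: `∃y⃗(c)`. -/
def exL {V C : Type*} (ex : V → C → C) (ys : List V) (c : C) : C := ys.foldr ex c

/-- The operator `∀⃗x` on sets of infinite sequences of constraints.
`ex` is the cylindrification of single variables (used for the outer `∃y⃗`),
`Ex` is the cylindrification `∃x⃗` over the (fixed) variables `x⃗`, and `D` is the
set of diagonal elements `d_{x⃗t⃗}` for admissible substitutions `[t⃗/x⃗]`.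
`∀⃗x(S) = { ∃y⃗(s) ∈ S | y⃗ ⊆ Var, s ∈ S, and every x⃗-variant s′ of s with
d_{x⃗t⃗}^ω ≤ s′ for admissible [t⃗/x⃗] belongs to S }`. -/
def ForallX {V C : Type*} [Lattice C] (ex : V → C → C) (Ex : C → C) (D : Set C)
    (S : Set (ℕ → C)) : Set (ℕ → C) :=
  { w | w ∈ S ∧ ∃ (ys : List V) (s : ℕ → C),
      (∀ i, w i = exL ex ys (s i)) ∧ s ∈ S ∧
      ∀ s' : ℕ → C, ∀ d ∈ D,
        (∀ i, Ex (s i) = Ex (s' i)) → (∀ i, d ≤ s' i) → s' ∈ S }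

/-- The operator `∀⃗x` is idempotent: `∀⃗x(∀⃗x(S)) = ∀⃗x(S)`. -/
theorem forallX_idem {V C : Type*} [Lattice C]
    (ex : V → C → C) (Ex : C → C) (D : Set C) (S : Set (ℕ → C)) :
    ForallX ex Ex D (ForallX ex Ex D S) = ForallX ex Ex D S := by
  ext w
  constructor
  · rintro ⟨hw, _⟩
    exact hw
  · rintro hw
    obtain ⟨hwS, ys, s, hws, hsS, hcond⟩ := hw
    refine ⟨⟨hwS, ys, s, hws, hsS, hcond⟩, ys, s, hws, ?_, ?_⟩
    · exact ⟨hsS, [], s, fun i => rfl, hsS, hcond⟩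
    · intro s' d hd hEx hle
      refine ⟨hcond s' d hd hEx hle, [], s', fun i => rfl,
        hcond s' d hd hEx hle, ?_⟩
      intro s'' d' hd' hEx' hle'
      exact hcond s'' d' hd' (fun i => (hEx i).trans (hEx' i)) hle'
end
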